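/- arXiv:1104.0317 — 4 statements merged into one kernel-verified Lean document; each statement's English description precedes it below -/
import Mathlib

section
/- Let A be a commutative integral domain with multiplicative identity e that is an associative algebra over ℝ. Let Ψ : A × A → A be a symmetric bilinear map such that a(bΨ(c,d) + cΨ(b,d) + dΨ(b,c)) = b(aΨ(c,d) + cΨ(a,d) + dΨ(a,c)) for all a,b,c,d ∈ A. Then Ψ(a,b) = ab·Ψ(e,e) for all a,b ∈ A; in particular Ψ is a 2-multiplier. -/
/-- A linear map `T : A → A` is a multiplier if `T(ab) = aT(b)` for all `a, b ∈ A`. -/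
def IsMultiplier {A : Type*} [CommRing A] [Algebra ℝ A] (T : A →ₗ[ℝ] A) : Prop :=
  ∀ a b : A, T (a * b) = a * T b

/-- A bilinear map `Ψ : A × A → A` is a 2-multiplier if for each `a ∈ A` the partial maps
`x ↦ Ψ(a,x)` and `x ↦ Ψ(x,a)` are multipliers. -/
def Is2Multiplier {A : Type*} [CommRing A] [Algebra ℝ A] (Ψ : A →ₗ[ℝ] A →ₗ[ℝ] A) : Prop :=
  ∀ a : A, (∀ x y : A, Ψ a (x * y) = x * Ψ a y) ∧ (∀ x y : A, Ψ (x * y) a = x * Ψ y a)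

/-- Let `A` be a commutative integral domain with identity `e = 1` that is an
associative algebra over `ℝ`. Let `Ψ : A × A → A` be a symmetric bilinear map such that
`a(bΨ(c,d) + cΨ(b,d) + dΨ(b,c)) = b(aΨ(c,d) + cΨ(a,d) + dΨ(a,c))` for all `a,b,c,d ∈ A`.
Then `Ψ(a,b) = ab·Ψ(e,e)` for all `a,b ∈ A`; in particular `Ψ` is a 2-multiplier. -/
theorem symm_bilinear_eq_two_multiplier (A : Type*) [CommRing A] [IsDomain A] [Algebra ℝ A]
    (Ψ : A →ₗ[ℝ] A →ₗ[ℝ] A) (hsymm : ∀ a b : A, Ψ a b = Ψ b a)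
    (heq : ∀ a b c d : A,
      a * (b * Ψ c d + c * Ψ b d + d * Ψ b c) = b * (a * Ψ c d + c * Ψ a d + d * Ψ a c)) :
    (∀ a b : A, Ψ a b = a * b * Ψ 1 1) ∧ Is2Multiplier Ψ := by
  have hchar : CharZero A := charZero_of_injective_algebraMap (algebraMap ℝ A).injective
  have h2 : (2 : A) ≠ 0 := two_ne_zero
  have h1 : ∀ a : A, Ψ a 1 = a * Ψ 1 1 := by
    intro a
    have e1 := heq a 1 1 1
    have e2 : (2 : A) * Ψ a 1 = 2 * (a * Ψ 1 1) := by linear_combination -e1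
    exact mul_left_cancel₀ h2 e2
  have hmain : ∀ a b : A, Ψ a b = a * b * Ψ 1 1 := by
    intro a b
    have e := heq a 1 b 1
    rw [h1 b, hsymm 1 b, h1 b, h1 a] at e
    linear_combination -e
  refine ⟨hmain, fun a => ⟨fun x y => ?_, fun x y => ?_⟩⟩
  · rw [hmain a (x * y), hmain a y]; ring
  · rw [hmain (x * y) a, hmain y a]; ring
end

section
/- Let A be a commutative integral domain with multiplicative identity e that is an associative algebra over ℝ. Let Ψ : A × A → A be a symmetric bilinear map with Ψ(ab,c) = Ψ(ac,b) for all a,b,c ∈ A, and suppose the trilinear map Ψ₁(a,b,c) = aΨ(b,c) − bΨ(a,c) satisfies Ψ₁(a,b,c) = −Ψ₁(a,c,b) for all a,b,c ∈ A. Then Ψ(a,b) = ab·Ψ(e,e) for all a,b ∈ A; in particular Ψ is a 2-multiplier. -/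
/-- Let `A` be a commutative integral domain with identity `e = 1` that is an
associative algebra over `ℝ`. Let `Ψ : A × A → A` be a symmetric bilinear map with
`Ψ(ab,c) = Ψ(ac,b)` for all `a,b,c ∈ A`, and suppose the trilinear map
`Ψ₁(a,b,c) = aΨ(b,c) − bΨ(a,c)` satisfies `Ψ₁(a,b,c) = −Ψ₁(a,c,b)` for all `a,b,c ∈ A`.
Then `Ψ(a,b) = ab·Ψ(e,e)` for all `a,b ∈ A`; in particular `Ψ` is a 2-multiplier. -/
theorem symm_bilinear_antisymm_eq_two_multiplier (A : Type*) [CommRing A] [IsDomain A]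
    [Algebra ℝ A] (Ψ : A →ₗ[ℝ] A →ₗ[ℝ] A)
    (hsymm : ∀ a b : A, Ψ a b = Ψ b a)
    (hcoc : ∀ a b c : A, Ψ (a * b) c = Ψ (a * c) b)
    (hanti : ∀ a b c : A, a * Ψ b c - b * Ψ a c = -(a * Ψ c b - c * Ψ a b)) :
    (∀ a b : A, Ψ a b = a * b * Ψ 1 1) ∧ Is2Multiplier Ψ := by
  haveI : CharZero A := charZero_of_injective_algebraMap (algebraMap ℝ A).injective
  have key : ∀ a b c : A, 2 * (a * Ψ b c) = b * Ψ a c + c * Ψ a b := by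
    intro a b c
    have h := hanti a b c
    rw [hsymm c b] at h
    ring_nf at h ⊢
    linear_combination h
  have h1 : ∀ a : A, Ψ a 1 = a * Ψ 1 1 := by
    intro a
    have h := key a 1 1
    simp only [one_mul] at h
    have : (2 : A) * Ψ a 1 = 2 * (a * Ψ 1 1) := by ring_nf; linear_combination -h
    exact mul_left_cancel₀ two_ne_zero this
  have main : ∀ a b : A, Ψ a b = a * b * Ψ 1 1 := by
    intro a b
    have h := key a b 1
    rw [one_mul, h1 a, h1 b] at h
    linear_combination -h
  refine ⟨main, fun a => ⟨fun x y => ?_, fun x y => ?_⟩⟩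
  · rw [main a (x*y), main a y]; ring
  · rw [main (x*y) a, main y a]; ring
end

section
/- Let A be a commutative integral domain with multiplicative identity e that is an associative algebra over ℝ, and suppose every local multiplier on A is a multiplier. Then for every n ≥ 1 and every (n+1)-linear map Ψ ∈ C_n(A), one has Ψ(x₁,…,x_{n+1}) = (x₁x₂⋯x_{n+1})·Ψ(e,…,e) for all x₁,…,x_{n+1} ∈ A. -/
open scoped BigOperators

/-- A linear map `T : A → A` is a local multiplier if for each `a ∈ A` there is a multiplier
`T_a` with `T(a) = T_a(a)`. -/
def IsLocalMultiplier {A : Type*} [CommRing A] [Algebra ℝ A] (T : A →ₗ[ℝ] A) : Prop :=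
  ∀ a : A, ∃ S : A →ₗ[ℝ] A, IsMultiplier S ∧ T a = S a

/-- `C_n(A)`: an `(n+1)`-linear map `Ψ` belongs to `C_n(A)` if
`Ψ(I₁ × ⋯ × I_{n+1}) ⊆ I₁I₂⋯I_{n+1}` for all ideals `I₁,…,I_{n+1}` of `A`. -/
def MemC (A : Type*) [CommRing A] [Algebra ℝ A] (n : ℕ)
    (Ψ : MultilinearMap ℝ (fun _ : Fin (n + 1) => A) A) : Prop :=
  ∀ (I : Fin (n + 1) → Ideal A) (x : Fin (n + 1) → A),
    (∀ i, x i ∈ I i) → Ψ x ∈ ∏ i, I i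

/-- Pulling one variable out of a map in `C_n(A)`. -/
lemma memC_pull_one {A : Type*} [CommRing A] [Algebra ℝ A]
    (hloc : ∀ T : A →ₗ[ℝ] A, IsLocalMultiplier T → IsMultiplier T)
    {n : ℕ} (Ψ : MultilinearMap ℝ (fun _ : Fin (n + 1) => A) A) (hΨ : MemC A n Ψ)
    (x : Fin (n + 1) → A) (i : Fin (n + 1)) :
    Ψ x = x i * Ψ (Function.update x i 1) := by
  classical
  set T : A →ₗ[ℝ] A := Ψ.toLinearMap x i with hTdef
  have hT : IsLocalMultiplier T := by
    intro a
    have hmem : Ψ (Function.update x i a) ∈ Ideal.span {a} := by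
      have h := hΨ (fun j => if j = i then Ideal.span {a} else ⊤)
        (Function.update x i a) ?_
      · have hprod : (∏ j, (if j = i then Ideal.span {a} else ⊤ : Ideal A))
            = Ideal.span {a} := by
          rw [Finset.prod_eq_single i]
          · simp
          · intro b _ hb
            simp [hb, Ideal.one_eq_top]
          · simp
        rwa [hprod] at h
      · intro j
        by_cases hj : j = i
        · subst hj
          simp [Ideal.mem_span_singleton_self]
        · simp [hj]
    obtain ⟨s, hs⟩ := Ideal.mem_span_singleton'.mp hmem
    refine ⟨LinearMap.mulLeft ℝ s, ?_, ?_⟩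
    · intro a b
      simp [LinearMap.mulLeft_apply]
      ring
    · simp [hTdef, MultilinearMap.toLinearMap, ← hs]
  have hmul := hloc T hT
  have h1 : T (x i) = x i * T 1 := by
    have := hmul (x i) 1
    simpa using this
  have hx : Function.update x i (x i) = x := Function.update_eq_self i x
  simpa [hTdef, MultilinearMap.toLinearMap, hx] using h1

/-- Let `A` be a commutative integral domain with identity `e = 1` that is an
associative algebra over `ℝ`, and suppose every local multiplier on `A` is a multiplier. Then
for every `n ≥ 1` and every `(n+1)`-linear map `Ψ ∈ C_n(A)`, one has
`Ψ(x₁,…,x_{n+1}) = (x₁x₂⋯x_{n+1})·Ψ(e,…,e)` for all `x₁,…,x_{n+1} ∈ A`. -/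
theorem memC_eq_of_local_multiplier (A : Type*) [CommRing A] [IsDomain A] [Algebra ℝ A]
    (hloc : ∀ T : A →ₗ[ℝ] A, IsLocalMultiplier T → IsMultiplier T) :
    ∀ n : ℕ, 1 ≤ n → ∀ Ψ : MultilinearMap ℝ (fun _ : Fin (n + 1) => A) A, MemC A n Ψ →
      ∀ x : Fin (n + 1) → A, Ψ x = (∏ i, x i) * Ψ (fun _ => 1) := by
  intro n _ Ψ hΨ x
  classical
  have main : ∀ s : Finset (Fin (n + 1)),
      Ψ x = (∏ i ∈ s, x i) * Ψ (fun j => if j ∈ s then 1 else x j) := by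
    intro s
    induction s using Finset.induction with
    | empty => simp
    | @insert i s hi ih =>
      have hupd : Function.update (fun j => if j ∈ s then 1 else x j) i 1
          = fun j => if j ∈ insert i s then 1 else x j := by
        funext j
        by_cases hj : j = i
        · subst hj; simp
        · simp [Function.update_of_ne hj, Finset.mem_insert, hj]
      have hkey := memC_pull_one hloc Ψ hΨ (fun j => if j ∈ s then 1 else x j) i
      rw [ih, hkey, hupd, Finset.prod_insert hi]
      simp [hi]
      ring
  have := main Finset.univ
  simpa using this
end

section
/- Let A be a commutative integral domain with multiplicative identity e that is an associative algebra over ℝ. If there exists n ≥ 1 such that H_n(A) = 0, then A is a Kadison algebra. -/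
open scoped BigOperators

/-- The coboundary operators `d_n : U_n(A) → U_{n+1}(A)`, acting on raw cochains
(`U_n(A)` is the space of `(n+1)`-linear maps `A^{n+1} → A`):
`d₀(f)(x₁,x₂) = f(x₁x₂)`;
`d₁(Ψ)(x₁,x₂,x₃) = Ψ(x₁x₂,x₃) − Ψ(x₁x₃,x₂)`;
for odd `2n−1` with `n ≥ 2`,
`d_{2n−1}(Φ)(x₁,…,x_{2n+1}) = Φ(x₁x₂,x₃,…,x_{2n},x_{2n+1}) − Φ(x₁x₂,x₃,…,x_{2n+1},x_{2n})`;
for even `2n` with `n ≥ 1`,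
`d_{2n}(Φ)(x₁,…,x_{2n+2}) = Σ_{σ ∈ S_{2n+2}} Φ(x_{σ(1)}x_{σ(2)}, x_{σ(3)}, …, x_{σ(2n+2)})`. -/
def cob (A : Type*) [CommRing A] : (n : ℕ) → ((Fin (n + 1) → A) → A) → (Fin (n + 2) → A) → A
  | 0, f, x => f ![x 0 * x 1]
  | 1, Ψ, x => Ψ ![x 0 * x 1, x 2] - Ψ ![x 0 * x 2, x 1]
  | m + 2, Φ, x =>
    if (m + 2) % 2 = 0 then
      ∑ σ : Equiv.Perm (Fin (m + 4)),
        Φ (Fin.cons (x (σ ⟨0, by omega⟩) * x (σ ⟨1, by omega⟩))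
            fun j : Fin (m + 2) => x (σ j.succ.succ))
    else
      Φ (Fin.cons (x ⟨0, by omega⟩ * x ⟨1, by omega⟩) fun j : Fin (m + 2) => x j.succ.succ) -
      Φ (Fin.cons (x ⟨0, by omega⟩ * x ⟨1, by omega⟩) fun j : Fin (m + 2) =>
          x (Equiv.swap (Fin.last (m + 3)) ((Fin.last (m + 2)).castSucc) j.succ.succ))

/-- A bilinear map `Ψ` is a local 2-multiplier if for each `(a,b) ∈ A²` there is a
2-multiplier `Ψ_{a,b}` with `Ψ(a,b) = Ψ_{a,b}(a,b)`. -/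
def IsLocal2Multiplier {A : Type*} [CommRing A] [Algebra ℝ A]
    (Ψ : A →ₗ[ℝ] A →ₗ[ℝ] A) : Prop :=
  ∀ a b : A, ∃ Ψ' : A →ₗ[ℝ] A →ₗ[ℝ] A, Is2Multiplier Ψ' ∧ Ψ a b = Ψ' a b

/-- `A` is a Kadison algebra if every local 2-multiplier on `A²` is a 2-multiplier. -/
def IsKadison (A : Type*) [CommRing A] [Algebra ℝ A] : Prop :=
  ∀ Ψ : A →ₗ[ℝ] A →ₗ[ℝ] A, IsLocal2Multiplier Ψ → Is2Multiplier Ψ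

/-!
If `H_n(A) = 0` for some `n ≥ 1`, every linear map `T : A → A` satisfies `T a = a T(1)`, i.e. is a
multiplier. Indeed, `T` gives an `(n+1)`-cocycle `Ψ`, hence a coboundary: `T(x₀)x₁⋯xₙ₊₁` for even
`n`, `x₀(T(x₁)x₂ − x₁T(x₂))x₃⋯xₙ₊₁` for odd `n ≥ 3` and `T(x₀)x₁x₂ − x₀T(x₁x₂)` for `n = 1`.
Coboundaries of even degree are symmetric, and those of odd degree vanish when their last two
arguments agree; evaluating `Ψ` at `(a,1,…,1)` and `(1,a,1,…,1)` then gives `T a = a T(1)`. So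
every bilinear map is a 2-multiplier, local or not.
-/

theorem Fin.swap_zero_one_apply_succ_succ {n : ℕ} (i : Fin n) :
    Equiv.swap (0 : Fin (n + 2)) 1 i.succ.succ = i.succ.succ :=
  Equiv.swap_apply_of_ne_of_ne (Fin.succ_ne_zero _) (Fin.succ_succ_ne_one _)

theorem Fin.swap_succ_succ_apply {n : ℕ} (i j k : Fin n) :
    Equiv.swap i.succ.succ j.succ.succ k.succ.succ = (Equiv.swap i j k).succ.succ :=
  ((Fin.succ_injective _).comp (Fin.succ_injective _)).swap_apply i j k

section Coboundary

variable {A : Type*} [CommRing A]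

theorem cob_even_comp_perm {m : ℕ} (hm : Even m) (Φ : (Fin (m + 3) → A) → A)
    (x : Fin (m + 4) → A) (τ : Equiv.Perm (Fin (m + 4))) :
    cob A (m + 2) Φ (x ∘ τ) = cob A (m + 2) Φ x := by
  rw [cob, cob, if_pos (by grind), if_pos (by grind)]
  exact Fintype.sum_equiv (Equiv.mulLeft τ) _ _ fun σ => rfl

theorem cob_even_eq_zero_of_comp_perm_eq_neg {m : ℕ} (hm : Even m)
    (Φ : (Fin (m + 3) → A) → A) (τ : Equiv.Perm (Fin (m + 4))) (hτ : τ * τ = 1) (hτ_ne : τ ≠ 1)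
    (hΦ : ∀ x : Fin (m + 4) → A,
      Φ (Fin.cons (x (τ 0) * x (τ 1)) fun j => x (τ j.succ.succ)) =
        -Φ (Fin.cons (x 0 * x 1) fun j => x j.succ.succ)) :
    cob A (m + 2) Φ = 0 := by
  funext x
  rw [cob, if_pos (by grind)]
  refine Finset.sum_ninvolution (· * τ) (fun σ => ?_) (fun σ _ => ?_)
    (fun _ => Finset.mem_univ _) (fun σ => by rw [mul_assoc, hτ, mul_one])
  · rw [add_eq_zero_iff_eq_neg']
    exact hΦ (x ∘ σ)
  · exact fun h => hτ_ne (mul_eq_left.mp h)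

theorem cob_odd_eq_zero_of_apply_last_eq {n : ℕ} (hn : Odd n) (Φ : (Fin (n + 1) → A) → A)
    (x : Fin (n + 2) → A) (hx : x (Fin.last (n + 1)) = x (Fin.last n).castSucc) :
    cob A n Φ x = 0 := by
  rcases n with _ | _ | m
  · exact absurd hn (by decide)
  · have h21 : x 2 = x 1 := hx
    rw [cob, sub_eq_zero, h21]
  · have hm : ¬ (m + 2) % 2 = 0 := by grind
    have hswap : x ∘ Equiv.swap (Fin.last (m + 3)) (Fin.last (m + 2)).castSucc = x := by
      rw [Equiv.comp_swap_eq_update, hx, Function.update_eq_self, ← hx, Function.update_eq_self]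
    rw [cob, if_neg hm, sub_eq_zero]
    exact congrArg (fun y => Φ (Fin.cons _ fun j => y j.succ.succ)) hswap.symm

end Coboundary

section Cochains

variable {R A : Type*} [CommSemiring R] [CommRing A] [Algebra R A] (T : A →ₗ[R] A)

def mulCochain (n : ℕ) : MultilinearMap R (fun _ : Fin (n + 1) => A) A :=
  (MultilinearMap.mkPiAlgebra R (Fin (n + 1)) A).compLinearMap (Fin.cons T fun _ => LinearMap.id)

theorem mulCochain_cons {n : ℕ} (u : A) (f : Fin n → A) :
    mulCochain T n (Fin.cons u f) = T u * ∏ i, f i := by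
  simp [mulCochain, Fin.prod_univ_succ]

def commCochain (n : ℕ) : MultilinearMap R (fun _ : Fin (n + 3) => A) A :=
  (MultilinearMap.mkPiAlgebra R (Fin (n + 3)) A).compLinearMap
      (Fin.cons LinearMap.id (Fin.cons T fun _ => LinearMap.id)) -
    (MultilinearMap.mkPiAlgebra R (Fin (n + 3)) A).compLinearMap
      (Fin.cons LinearMap.id (Fin.cons LinearMap.id (Fin.cons T fun _ => LinearMap.id)))

theorem commCochain_cons {n : ℕ} (u : A) (f : Fin (n + 2) → A) :
    commCochain T n (Fin.cons u f) =
      u * (T (f 0) * f 1 - f 0 * T (f 1)) * ∏ i : Fin n, f i.succ.succ := by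
  simp only [commCochain, sub_apply, MultilinearMap.compLinearMap_apply,
    MultilinearMap.mkPiAlgebra_apply, Fin.prod_univ_succ, Fin.cons_zero, Fin.cons_succ,
    Fin.succ_zero_eq_one, LinearMap.id_coe, id_eq]
  ring

theorem commCochain_cons_comp_swap {n : ℕ} (u : A) (f : Fin (n + 2) → A) :
    commCochain T n (Fin.cons u (f ∘ Equiv.swap 0 1)) = -commCochain T n (Fin.cons u f) := by
  simp only [commCochain_cons, Function.comp_apply, Equiv.swap_apply_left, Equiv.swap_apply_right,
    Fin.swap_zero_one_apply_succ_succ]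
  ring

def defectCochain : MultilinearMap R (fun _ : Fin 3 => A) A where
  toFun y := T (y 0) * (y 1 * y 2) - y 0 * T (y 1 * y 2)
  map_update_add' := by
    intro dec y i u v
    -- the canonical instance, so that `simp` can decide the index tests in `Function.update`
    obtain rfl : dec = instDecidableEqFin 3 := Subsingleton.elim _ _
    fin_cases i <;>
      simp only [Fin.zero_eta, Fin.mk_one, Fin.reduceFinMk, Function.update_self,
        Function.update_of_ne, ne_eq, Fin.reduceEq, not_false_eq_true, add_mul, mul_add,
        map_add] <;>
      ring
  map_update_smul' := by
    intro dec y i c u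
    obtain rfl : dec = instDecidableEqFin 3 := Subsingleton.elim _ _
    fin_cases i <;> simp [map_smul, smul_sub]

theorem defectCochain_cons (u : A) (f : Fin 2 → A) :
    defectCochain T (Fin.cons u f) = T u * (f 0 * f 1) - u * T (f 0 * f 1) := rfl

theorem cob_mulCochain {m : ℕ} (hm : Odd m) : cob A (m + 2) (mulCochain T (m + 2)) = 0 := by
  funext x
  have hm' : ¬ (m + 2) % 2 = 0 := by grind
  rw [cob, if_neg hm', Pi.zero_apply, mulCochain_cons, mulCochain_cons, sub_eq_zero]
  have hτ (j : Fin (m + 2)) :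
      Equiv.swap (Fin.last (m + 3)) (Fin.last (m + 2)).castSucc j.succ.succ =
        (Equiv.swap (Fin.last (m + 1)) (Fin.last m).castSucc j).succ.succ :=
    Fin.swap_succ_succ_apply (Fin.last (m + 1)) (Fin.last m).castSucc j
  simp only [hτ]
  exact congrArg _ (Fintype.prod_equiv (Equiv.swap _ _) _ _ fun _ => rfl).symm

theorem cob_commCochain {m : ℕ} (hm : Even m) : cob A (m + 2) (commCochain T m) = 0 := by
  set τ := Equiv.swap (0 : Fin (m + 2)).succ.succ (1 : Fin (m + 2)).succ.succ
  have hτ0 : τ 0 = 0 :=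
    Equiv.swap_apply_of_ne_of_ne (Fin.succ_ne_zero _).symm (Fin.succ_ne_zero _).symm
  have hτ1 : τ 1 = 1 :=
    Equiv.swap_apply_of_ne_of_ne (Fin.succ_succ_ne_one _).symm (Fin.succ_succ_ne_one _).symm
  refine cob_even_eq_zero_of_comp_perm_eq_neg hm _ τ (Equiv.swap_mul_self _ _)
    (by simp only [τ, Ne, Equiv.swap_eq_one_iff, Fin.succ_inj]; exact zero_ne_one)
    fun x => ?_
  simp only [hτ0, hτ1, τ, Fin.swap_succ_succ_apply]
  exact commCochain_cons_comp_swap T _ fun j => x j.succ.succ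

theorem cob_defectCochain : cob A 2 (defectCochain T) = 0 := by
  set τ : Equiv.Perm (Fin 4) := Equiv.swap 0 2 * Equiv.swap 1 3
  refine cob_even_eq_zero_of_comp_perm_eq_neg (m := 0) (by decide) _ τ (by decide) (by decide)
    fun x => ?_
  have h0 : τ 0 = (0 : Fin 2).succ.succ := by decide
  have h1 : τ 1 = (1 : Fin 2).succ.succ := by decide
  have h2 : τ (0 : Fin 2).succ.succ = 0 := by decide
  have h3 : τ (1 : Fin 2).succ.succ = 1 := by decide
  rw [defectCochain_cons, defectCochain_cons, h0, h1, h2, h3]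
  ring

end Cochains

/-- `H_n(A) = ker d_{n+1} / im d_n` vanishes, for `R`-multilinear cochains. -/
def HasVanishingCohomology (R A : Type*) [Semiring R] [CommRing A] [Module R A] (n : ℕ) : Prop :=
  ∀ Ψ : MultilinearMap R (fun _ : Fin (n + 1 + 1) => A) A, cob A (n + 1) ⇑Ψ = 0 →
    ∃ Φ : MultilinearMap R (fun _ : Fin (n + 1) => A) A, ⇑Ψ = cob A n ⇑Φ

namespace HasVanishingCohomology

variable {R A : Type*} [CommSemiring R] [CommRing A] [Algebra R A]

theorem apply_eq_mul_apply_one_of_eq_one (h : HasVanishingCohomology R A 1) (T : A →ₗ[R] A)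
    (a : A) : T a = a * T 1 := by
  obtain ⟨Φ, hΦ⟩ := h (defectCochain T) (cob_defectCochain T)
  have key := congrFun hΦ (Fin.cons a fun _ => 1)
  rw [defectCochain_cons, cob_odd_eq_zero_of_apply_last_eq odd_one _ _ rfl] at key
  simpa [sub_eq_zero] using key

theorem apply_eq_mul_apply_one_of_even {k : ℕ} (hk : Even k)
    (h : HasVanishingCohomology R A (k + 2)) (T : A →ₗ[R] A) (a : A) : T a = a * T 1 := by
  obtain ⟨Φ, hΦ⟩ := h (mulCochain T (k + 3)) (cob_mulCochain T hk.add_one)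
  set x : Fin (k + 4) → A := Fin.cons a fun _ => 1
  have hx : x ∘ Equiv.swap 0 1 = Fin.cons 1 (Fin.cons a fun _ => 1) := by
    funext i
    refine Fin.cases ?_ (Fin.cases ?_ fun j => ?_) i <;>
      simp [x, Fin.swap_zero_one_apply_succ_succ]
  have key : mulCochain T (k + 3) (x ∘ Equiv.swap 0 1) = mulCochain T (k + 3) x := by
    rw [hΦ, cob_even_comp_perm hk]
  rw [hx, mulCochain_cons, mulCochain_cons] at key
  simpa [mul_comm] using key.symm

theorem apply_eq_mul_apply_one_of_odd {k : ℕ} (hk : Odd k)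
    (h : HasVanishingCohomology R A (k + 2)) (T : A →ₗ[R] A) (a : A) : T a = a * T 1 := by
  obtain ⟨Φ, hΦ⟩ := h (commCochain T (k + 1)) (cob_commCochain T hk.add_one)
  have key := congrFun hΦ (Fin.cons 1 (Fin.cons a fun _ => 1))
  rw [commCochain_cons, cob_odd_eq_zero_of_apply_last_eq (hk.add_even even_two) _ _ rfl] at key
  simpa [Fin.cons_one, sub_eq_zero] using key

theorem apply_eq_mul_apply_one {n : ℕ} (h : HasVanishingCohomology R A n) (hn : 1 ≤ n)
    (T : A →ₗ[R] A) (a : A) : T a = a * T 1 := by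
  obtain _ | _ | k := n
  · omega
  · exact h.apply_eq_mul_apply_one_of_eq_one T a
  · obtain hk | hk := Nat.even_or_odd k
    · exact h.apply_eq_mul_apply_one_of_even hk T a
    · exact h.apply_eq_mul_apply_one_of_odd hk T a

end HasVanishingCohomology

theorem isMultiplier_of_apply_eq_mul_apply_one {A : Type*} [CommRing A] [Algebra ℝ A]
    {T : A →ₗ[ℝ] A} (hT : ∀ a, T a = a * T 1) : IsMultiplier T := fun a b => by
  rw [hT, hT b, mul_assoc]

theorem isKadison_of_vanishing_cohomology_general (A : Type*) [CommRing A] [Algebra ℝ A]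
    (h : ∃ n : ℕ, 1 ≤ n ∧
      ∀ Ψ : MultilinearMap ℝ (fun _ : Fin (n + 1 + 1) => A) A, cob A (n + 1) ⇑Ψ = 0 →
        ∃ Φ : MultilinearMap ℝ (fun _ : Fin (n + 1) => A) A, ⇑Ψ = cob A n ⇑Φ) :
    IsKadison A := by
  obtain ⟨n, hn, hvan⟩ := h
  have hmul (T : A →ₗ[ℝ] A) : IsMultiplier T :=
    isMultiplier_of_apply_eq_mul_apply_one
      (HasVanishingCohomology.apply_eq_mul_apply_one (R := ℝ) hvan hn T)
  exact fun Ψ _ a => ⟨hmul (Ψ a), hmul (Ψ.flip a)⟩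

/-- Let `A` be a commutative integral domain that is an `ℝ`-algebra. If
there exists `n ≥ 1` with `H_n(A) = ker(d_{n+1})/im(d_n) = 0` (every `(n+2)`-linear cocycle
is a coboundary), then `A` is a Kadison algebra. -/
theorem isKadison_of_vanishing_cohomology (A : Type*) [CommRing A] [IsDomain A] [Algebra ℝ A]
    (h : ∃ n : ℕ, 1 ≤ n ∧
      ∀ Ψ : MultilinearMap ℝ (fun _ : Fin (n + 1 + 1) => A) A, cob A (n + 1) ⇑Ψ = 0 →
        ∃ Φ : MultilinearMap ℝ (fun _ : Fin (n + 1) => A) A, ⇑Ψ = cob A n ⇑Φ) :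
    IsKadison A :=
  isKadison_of_vanishing_cohomology_general A h
end
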